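/- arXiv:2102.11177 — 2 statements merged into one kernel-verified Lean document; each statement's English description precedes it below -/
import Mathlib

section
/- A finite simple graph Γ is isomorphic to an induced subgraph of the power graph of some finite group if and only if Γ is the comparability graph of a partial order, i.e., there is a partial order ≤ on the vertex set of Γ such that distinct vertices x and y are adjacent in Γ exactly when x ≤ y or y ≤ x. Moreover, when this holds, the group can be taken to be a finite cyclic group of squarefree order. -/
open SimpleGraph

/-- The power graph of a group: distinct `x`,`y` adjacent iff one is a power of the other. -/
def powGraph (G : Type*) [Group G] : SimpleGraph G where
  Adj x y := x ≠ y ∧ (x ∈ Subgroup.zpowers y ∨ y ∈ Subgroup.zpowers x)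
  symm := ⟨fun _ _ h => ⟨h.1.symm, h.2.symm⟩⟩
  loopless := ⟨fun _ h => h.1 rfl⟩

/-- The enhanced power graph of a group: distinct `x`,`y` adjacent iff `⟨x,y⟩` is cyclic. -/
def epowGraph (G : Type*) [Group G] : SimpleGraph G where
  Adj x y := x ≠ y ∧ IsCyclic (Subgroup.closure ({x, y} : Set G))
  symm := by
    refine ⟨?_⟩
    intro x y h
    refine ⟨h.1.symm, ?_⟩
    rw [Set.pair_comm]
    exact h.2
  loopless := ⟨fun _ h => h.1 rfl⟩

/-- The commuting graph of a group: distinct `x`,`y` adjacent iff `x*y = y*x`. -/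
def comGraph (G : Type*) [Group G] : SimpleGraph G where
  Adj x y := x ≠ y ∧ Commute x y
  symm := ⟨fun _ _ h => ⟨h.1.symm, h.2.symm⟩⟩
  loopless := ⟨fun _ h => h.1 rfl⟩

/-- The non-generating graph of a group: distinct `x`,`y` adjacent iff `⟨x,y⟩ ≠ G`. -/
def ngenGraph (G : Type*) [Group G] : SimpleGraph G where
  Adj x y := x ≠ y ∧ Subgroup.closure ({x, y} : Set G) ≠ ⊤
  symm := by
    refine ⟨?_⟩
    intro x y h
    refine ⟨h.1.symm, ?_⟩
    rw [Set.pair_comm]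
    exact h.2
  loopless := ⟨fun _ h => h.1 rfl⟩

/-- The generating graph of a group: distinct `x`,`y` adjacent iff `⟨x,y⟩ = G`. -/
def genGraph (G : Type*) [Group G] : SimpleGraph G where
  Adj x y := x ≠ y ∧ Subgroup.closure ({x, y} : Set G) = ⊤
  symm := by
    refine ⟨?_⟩
    intro x y h
    refine ⟨h.1.symm, ?_⟩
    rw [Set.pair_comm]
    exact h.2
  loopless := ⟨fun _ h => h.1 rfl⟩

/-- `Γ` is the comparability graph of some partial order on its vertex set. -/
def IsComparabilityGraph {V : Type*} (Γ : SimpleGraph V) : Prop :=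
  ∃ po : PartialOrder V, ∀ x y : V, Γ.Adj x y ↔ x ≠ y ∧ (po.le x y ∨ po.le y x)

/-- The group `G` is cyclic. -/
def IsCyclicGroup (G : Type*) [Group G] : Prop := IsCyclic G

open Multiplicative in
theorem exists_cyclic_embed (V : Type) [Fintype V] (Γ : SimpleGraph V)
    (h : IsComparabilityGraph Γ) :
    ∃ (G : Type) (instG : Group G) (_ : Fintype G),
      @IsCyclicGroup G instG ∧ Squarefree (Nat.card G) ∧
      Nonempty (Γ ↪g @powGraph G instG) := by
  classical
  obtain ⟨po, hpo⟩ := h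
  let e := Fintype.equivFin V
  let p : V → ℕ := fun v => Nat.nth Nat.Prime (e v)
  have hp : ∀ v, (p v).Prime := fun v => Nat.prime_nth_prime _
  have hpinj : Function.Injective p := by
    intro a b hab
    exact e.injective (Fin.val_injective (Nat.nth_injective Nat.infinite_setOf_prime hab))
  haveI hnz : ∀ v, NeZero (p v) := fun v => ⟨(hp v).ne_zero⟩
  haveI hfact : ∀ v, Fact (p v).Prime := fun v => ⟨hp v⟩
  have hcop : ∀ a b : V, a ≠ b → Nat.Coprime (p a) (p b) := fun a b hab =>
    (Nat.coprime_primes (hp a) (hp b)).mpr (fun hh => hab (hpinj hh))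
  have happz : ∀ (x : ∀ v : V, Multiplicative (ZMod (p v))) (j : ℤ) (u : V),
      (x ^ j) u = (x u) ^ j := fun x j u => rfl
  have happn : ∀ (x : ∀ v : V, Multiplicative (ZMod (p v))) (j : ℕ) (u : V),
      (x ^ j) u = (x u) ^ j := fun x j u => rfl
  let f : V → (∀ v : V, Multiplicative (ZMod (p v))) := fun v u => ofAdd (if po.le u v then (1 : ZMod (p u)) else 0)
  -- key membership lemma
  have hmem : ∀ v w : V, f w ∈ Subgroup.zpowers (f v) ↔ po.le w v := by
    intro v w
    constructor
    · intro hm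
      rw [Subgroup.mem_zpowers_iff] at hm
      obtain ⟨j, hj⟩ := hm
      by_contra hwv
      have hcf := congrFun hj w
      rw [happz] at hcf
      have h0 : f v w = 1 := by simp [f, hwv]
      rw [h0, one_zpow] at hcf
      have h1 : f w w = ofAdd 1 := by simp [f, po.le_refl]
      rw [h1] at hcf
      have : (0 : ZMod (p w)) = 1 := by
        simpa using congrArg Multiplicative.toAdd hcf
      exact one_ne_zero this.symm
    · intro hwv
      set A := ∏ u ∈ Finset.univ.filter (fun u => po.le u w), p u with hA
      set B := ∏ u ∈ Finset.univ.filter (fun u => po.le u v ∧ ¬ po.le u w), p u with hB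
      have hAB : Nat.Coprime A B := by
        apply Nat.Coprime.prod_left
        intro i hi
        apply Nat.Coprime.prod_right
        intro j hj
        simp only [Finset.mem_filter] at hi hj
        exact hcop i j (fun hij => hj.2.2 (hij ▸ hi.2))
      obtain ⟨k, hk1, hk0⟩ := Nat.chineseRemainder hAB 1 0
      rw [Subgroup.mem_zpowers_iff]
      refine ⟨(k : ℤ), ?_⟩
      rw [zpow_natCast]
      funext u
      rw [happn]
      by_cases h1 : po.le u w
      · have h2 : po.le u v := po.le_trans _ _ _ h1 hwv
        have hpu : p u ∣ A := Finset.dvd_prod_of_mem p (by simp [h1])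
        have hk : (k : ZMod (p u)) = 1 := by
          have := (Nat.ModEq.of_dvd hpu hk1)
          have h3 := (ZMod.natCast_eq_natCast_iff k 1 (p u)).mpr this
          simpa using h3
        show (ofAdd (if po.le u v then (1 : ZMod (p u)) else 0)) ^ k
            = ofAdd (if po.le u w then (1 : ZMod (p u)) else 0)
        rw [if_pos h1, if_pos h2, ← ofAdd_nsmul, nsmul_eq_mul, mul_one, hk]
      · by_cases h2 : po.le u v
        · have hpu : p u ∣ B := Finset.dvd_prod_of_mem p (by simp [h1, h2])
          have hk : (k : ZMod (p u)) = 0 := by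
            have := (Nat.ModEq.of_dvd hpu hk0)
            have h3 := (ZMod.natCast_eq_natCast_iff k 0 (p u)).mpr this
            simpa using h3
          show (ofAdd (if po.le u v then (1 : ZMod (p u)) else 0)) ^ k
              = ofAdd (if po.le u w then (1 : ZMod (p u)) else 0)
          rw [if_pos h2, if_neg h1, ← ofAdd_nsmul, nsmul_eq_mul, mul_one, hk]
        · show (ofAdd (if po.le u v then (1 : ZMod (p u)) else 0)) ^ k
              = ofAdd (if po.le u w then (1 : ZMod (p u)) else 0)
          rw [if_neg h2, if_neg h1, ← ofAdd_nsmul, smul_zero]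
  -- injectivity
  have hfinj : Function.Injective f := by
    intro a b hab
    have ha := congrFun hab a
    have hb := congrFun hab b
    simp only [f] at ha hb
    rw [if_pos (po.le_refl a)] at ha
    rw [if_pos (po.le_refl b)] at hb
    have hab1 : po.le a b := by
      by_contra hc
      rw [if_neg hc] at ha
      have h10 : (1 : ZMod (p a)) = 0 := by simpa using congrArg Multiplicative.toAdd ha
      exact one_ne_zero h10
    have hab2 : po.le b a := by
      by_contra hc
      rw [if_neg hc] at hb
      have h10 : (1 : ZMod (p b)) = 0 := by simpa using (congrArg Multiplicative.toAdd hb).symm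
      exact one_ne_zero h10
    exact po.le_antisymm _ _ hab1 hab2
  -- cyclicity
  let g : (∀ v : V, Multiplicative (ZMod (p v))) := fun u => ofAdd (1 : ZMod (p u))
  let N := ∏ v : V, p v
  have hcard : Nat.card (∀ v : V, Multiplicative (ZMod (p v))) = N := by
    rw [Nat.card_pi]
    exact Finset.prod_congr rfl fun v _ => by
      rw [Nat.card_congr Multiplicative.toAdd, Nat.card_zmod]
  have hord1 : orderOf g ∣ N := by
    apply orderOf_dvd_of_pow_eq_one
    funext u
    rw [happn]
    show (ofAdd (1 : ZMod (p u))) ^ N = 1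
    rw [← ofAdd_nsmul, nsmul_eq_mul, mul_one]
    have : ((N : ℕ) : ZMod (p u)) = 0 :=
      (ZMod.natCast_eq_zero_iff _ _).mpr (Finset.dvd_prod_of_mem p (Finset.mem_univ u))
    rw [this, ofAdd_zero]
  have hdvd : ∀ u : V, p u ∣ orderOf g := by
    intro u
    have h1 : orderOf (g u) ∣ orderOf g := by
      have := orderOf_map_dvd (Pi.evalMonoidHom (fun v => Multiplicative (ZMod (p v))) u) g
      exact this
    have h2 : orderOf (g u) = p u := by
      show orderOf (ofAdd (1 : ZMod (p u))) = p u
      rw [orderOf_ofAdd_eq_addOrderOf, ZMod.addOrderOf_one]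
    rwa [h2] at h1
  have hprodvd : ∀ s : Finset V, (∏ v ∈ s, p v) ∣ orderOf g := by
    intro s
    induction s using Finset.induction_on with
    | empty => simp
    | @insert a s hni ih =>
      rw [Finset.prod_insert hni]
      refine Nat.Coprime.mul_dvd_of_dvd_of_dvd ?_ (hdvd a) ih
      exact Nat.Coprime.prod_right fun j hj => hcop a j (fun hh => hni (hh ▸ hj))
  have hord : orderOf g = Nat.card (∀ v : V, Multiplicative (ZMod (p v))) := by
    rw [hcard]
    exact Nat.dvd_antisymm hord1 (hprodvd Finset.univ)
  have hcyc : IsCyclic (∀ v : V, Multiplicative (ZMod (p v))) := isCyclic_of_orderOf_eq_card g hord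
  -- squarefree
  have hsf : ∀ s : Finset V, Squarefree (∏ v ∈ s, p v) := by
    intro s
    induction s using Finset.induction_on with
    | empty => simpa using squarefree_one
    | @insert a s hni ih =>
      rw [Finset.prod_insert hni]
      refine (Nat.squarefree_mul ?_).mpr ⟨(hp a).prime.squarefree, ih⟩
      exact Nat.Coprime.prod_right fun j hj => hcop a j (fun hh => hni (hh ▸ hj))
  refine ⟨∀ v : V, Multiplicative (ZMod (p v)), inferInstance, inferInstance, hcyc, by rw [hcard]; exact hsf Finset.univ, ⟨⟨⟨f, hfinj⟩, ?_⟩⟩⟩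
  intro a b
  show (f a ≠ f b ∧ (f a ∈ Subgroup.zpowers (f b) ∨ f b ∈ Subgroup.zpowers (f a))) ↔ Γ.Adj a b
  rw [hmem, hmem, hpo, hfinj.ne_iff]

theorem comparability_of_embed (V : Type) [Fintype V] (Γ : SimpleGraph V)
    (G : Type) [Group G] (f : Γ ↪g powGraph G) : IsComparabilityGraph Γ := by
  classical
  let e := Fintype.equivFin V
  let r : V → V → Prop := fun x y => f x ∈ Subgroup.zpowers (f y)
  have hrt : ∀ x y z, r x y → r y z → r x z := fun x y z h1 h2 =>
    (Subgroup.zpowers_le.mpr h2) h1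
  let L : V → V → Prop := fun x y => x = y ∨ (r x y ∧ (¬ r y x ∨ e x < e y))
  refine ⟨{ le := L, lt := fun a b => L a b ∧ ¬ L b a,
            le_refl := fun x => Or.inl rfl,
            le_trans := ?_, lt_iff_le_not_ge := fun _ _ => Iff.rfl,
            le_antisymm := ?_ }, ?_⟩
  · rintro x y z (rfl | ⟨rxy, hx⟩) hyz
    · exact hyz
    rcases hyz with rfl | ⟨ryz, hy⟩
    · exact Or.inr ⟨rxy, hx⟩
    refine Or.inr ⟨hrt _ _ _ rxy ryz, ?_⟩
    by_cases hzx : r z x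
    · have h1 : e x < e y := by
        rcases hx with h | h
        · exact absurd (hrt _ _ _ ryz hzx) h
        · exact h
      have h2 : e y < e z := by
        rcases hy with h | h
        · exact absurd (hrt _ _ _ hzx rxy) h
        · exact h
      exact Or.inr (h1.trans h2)
    · exact Or.inl hzx
  · rintro x y (rfl | ⟨rxy, hx⟩) hyx
    · rfl
    rcases hyx with rfl | ⟨ryx, hy⟩
    · rfl
    have h1 : e x < e y := hx.resolve_left (not_not_intro ryx)
    have h2 : e y < e x := hy.resolve_left (not_not_intro rxy)
    exact absurd (h1.trans h2) (lt_irrefl _)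
  · intro x y
    have key : Γ.Adj x y ↔ f x ≠ f y ∧ (r x y ∨ r y x) := by
      rw [← f.map_rel_iff]; rfl
    rw [key]
    constructor
    · rintro ⟨hne, hr⟩
      have hxy : x ≠ y := fun hh => hne (by rw [hh])
      refine ⟨hxy, ?_⟩
      have hexy : e x ≠ e y := fun hh => hxy (e.injective hh)
      rcases hr with rxy | ryx
      · by_cases h2 : r y x
        · rcases lt_or_gt_of_ne hexy with hlt | hgt
          · exact Or.inl (Or.inr ⟨rxy, Or.inr hlt⟩)
          · exact Or.inr (Or.inr ⟨h2, Or.inr hgt⟩)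
        · exact Or.inl (Or.inr ⟨rxy, Or.inl h2⟩)
      · by_cases h2 : r x y
        · rcases lt_or_gt_of_ne hexy with hlt | hgt
          · exact Or.inl (Or.inr ⟨h2, Or.inr hlt⟩)
          · exact Or.inr (Or.inr ⟨ryx, Or.inr hgt⟩)
        · exact Or.inr (Or.inr ⟨ryx, Or.inl h2⟩)
    · rintro ⟨hxy, hL⟩
      refine ⟨fun hh => hxy (f.injective hh), ?_⟩
      rcases hL with (rfl | ⟨rxy, _⟩) | (rfl | ⟨ryx, _⟩)
      · exact absurd rfl hxy
      · exact Or.inl rxy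
      · exact absurd rfl hxy
      · exact Or.inr ryx

/-- A finite simple graph is an induced subgraph of the power graph of some
finite group iff it is the comparability graph of a partial order; moreover in that case the
group can be taken cyclic of squarefree order. -/
theorem graph_embeds_in_powGraph_iff_comparability (V : Type) [Fintype V] (Γ : SimpleGraph V) :
    ((∃ (G : Type) (instG : Group G) (_ : Fintype G), Nonempty (Γ ↪g @powGraph G instG)) ↔
      IsComparabilityGraph Γ) ∧
    (IsComparabilityGraph Γ →
      ∃ (G : Type) (instG : Group G) (_ : Fintype G),
        @IsCyclicGroup G instG ∧ Squarefree (Nat.card G) ∧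
        Nonempty (Γ ↪g @powGraph G instG)) := by
  constructor
  · constructor
    · rintro ⟨G, instG, instF, ⟨f⟩⟩
      exact comparability_of_embed V Γ G f
    · intro h
      obtain ⟨G, iG, iF, _, _, hf⟩ := exists_cyclic_embed V Γ h
      exact ⟨G, iG, iF, hf⟩
  · exact exists_cyclic_embed V Γ
end

section
/- Let G be an infinite group. The following are equivalent: (a) the commuting graph of G has no infinite coclique, i.e., every subset of G whose elements pairwise do not commute is finite; (b) there is a finite upper bound n such that every set of pairwise non-commuting elements of G has size at most n; (c) the centre Z(G) has finite index in G. -/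
open SimpleGraph

/-!
If pairwise non-commuting sets are finite, then every centralizer `C(a)` has finite index: a
maximal pairwise non-commuting set `M ∋ a` is finite and `G = ⋃ x ∈ M, C(x)`, so by Neumann's
covering lemma the centralizers of finite index still cover `G`, and `a` lies only in `C(a)`.
If moreover `Z(G)` had infinite index, no subgroup of finite index would be abelian, so one can
pick non-commuting `uₙ, vₙ` in the descending chain `Hₙ₊₁ = Hₙ ∩ C(uₙ) ∩ C(vₙ)` of subgroups of
finite index; then the elements `tₙ = u₀ ⋯ uₙ₋₁ vₙ` are pairwise non-commuting: for `m < n`,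
`tₘ = p vₘ` and `tₙ = p uₘ q` where `p` and `q` commute with each other and with `uₘ` and `vₘ`.
Conversely, pairwise non-commuting elements lie in distinct cosets of `Z(G)`.
-/

theorem Set.finite_of_forall_finset_card_le {α : Type*} {S : Set α} {n : ℕ}
    (h : ∀ T : Finset α, (T : Set α) ⊆ S → T.card ≤ n) : S.Finite := by
  by_contra hinf
  obtain ⟨T, hTS, hT⟩ := Set.Infinite.exists_subset_card_eq hinf (n + 1)
  have := h T hTS
  omega

section Neumann

open Subgroup
open scoped Pointwise

variable {G : Type*} [Group G]

theorem commute_of_commute_mul_mul {p q x y : G} (hpx : Commute p x) (hpy : Commute p y)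
    (hpq : Commute p q) (hqx : Commute q x)
    (h : Commute (p * x) (p * y * q)) : Commute x y := by
  have hxq : Commute (p * x) (p * y) := by
    simpa using h.mul_right (hpq.mul_left hqx.symm).inv_right
  have hxy : Commute (p * x) y := by
    simpa using ((Commute.refl p).mul_left hpx.symm).inv_right.mul_right hxq
  simpa using hpy.inv_left.mul_left hxy

theorem exists_commute_of_maximal_pairwise_not_commute {M : Set G}
    (hM : Maximal (fun T : Set G => T.Pairwise fun x y => ¬Commute x y) M) (g : G) :
    ∃ x ∈ M, Commute x g := by
  by_contra! h
  have hins : (insert g M).Pairwise fun x y => ¬Commute x y :=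
    hM.prop.insert fun x hx _ => ⟨fun hc => h x hx hc.symm, h x hx⟩
  exact h g (hM.mem_of_prop_insert hins) (Commute.refl g)

theorem finiteIndex_centralizer_of_pairwise_not_commute_finite
    (hfin : ∀ S : Set G, S.Pairwise (fun x y => ¬Commute x y) → S.Finite) (a : G) :
    (centralizer {a}).FiniteIndex := by
  classical
  obtain ⟨M, haM, hM⟩ := zorn_subset_nonempty {T : Set G | T.Pairwise fun x y => ¬Commute x y}
    (fun c hc hchain _ => ⟨⋃₀ c, hchain.pairwise_sUnion.mpr hc, fun _ => Set.subset_sUnion_of_mem⟩)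
    {a} (Set.pairwise_singleton _ _)
  have hMfin := hfin M hM.prop
  have hcover : ⋃ x ∈ hMfin.toFinset, (1 : G) • (centralizer {x} : Set G) = Set.univ := by
    refine Set.eq_univ_of_forall fun g => ?_
    obtain ⟨x, hx, hxg⟩ := exists_commute_of_maximal_pairwise_not_commute hM g
    simpa [mem_centralizer_singleton_iff] using ⟨x, hx, hxg.eq.symm⟩
  have ha := Subgroup.leftCoset_cover_filter_FiniteIndex hcover ▸ Set.mem_univ a
  simp only [Set.mem_iUnion, one_smul, SetLike.mem_coe, Finset.mem_filter,
    hMfin.mem_toFinset, exists_prop, mem_centralizer_singleton_iff] at ha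
  obtain ⟨x, ⟨hxM, hx⟩, hxa⟩ := ha
  obtain rfl : x = a := by_contra fun hne => hM.prop hxM (haM rfl) hne hxa.symm
  exact hx

theorem exists_not_commute_of_not_finiteIndex_center
    (hFC : ∀ a : G, (centralizer {a}).FiniteIndex) (hZ : ¬(center G).FiniteIndex)
    (H : Subgroup G) [H.FiniteIndex] : ∃ x ∈ H, ∃ y ∈ H, ¬Commute x y := by
  by_contra! hH
  have : (⨅ q : G ⧸ H, centralizer {q.out}).FiniteIndex := finiteIndex_iInf fun _ => hFC _
  -- Every `g` is `q.out * h` with `h ∈ H`, so `H ⊓ ⨅ q, C(q.out)` is central.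
  refine hZ (finiteIndex_of_le (H := H ⊓ ⨅ q : G ⧸ H, centralizer {q.out}) fun k hk => ?_)
  obtain ⟨hkH, hkC⟩ := mem_inf.mp hk
  refine mem_center_iff.mpr fun g => (?_ : Commute k g).eq.symm
  have hout : Commute k (g : G ⧸ H).out :=
    mem_centralizer_singleton_iff.mp (mem_iInf.mp hkC (g : G ⧸ H))
  have hrest : Commute k ((g : G ⧸ H).out⁻¹ * g) :=
    hH k hkH _ (QuotientGroup.eq.mp (QuotientGroup.out_eq' _))
  simpa using hout.mul_right hrest

theorem exists_seq_not_commute_of_forall_finiteIndex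
    (hFC : ∀ a : G, (centralizer {a}).FiniteIndex)
    (hH : ∀ H : Subgroup G, H.FiniteIndex → ∃ x ∈ H, ∃ y ∈ H, ¬Commute x y) :
    ∃ u v : ℕ → G, (∀ n, ¬Commute (u n) (v n)) ∧ ∀ i j, i < j →
      Commute (u i) (u j) ∧ Commute (u i) (v j) ∧ Commute (v i) (u j) ∧ Commute (v i) (v j) := by
  choose x hx y hy hxy using hH
  let next (H : {H : Subgroup G // H.FiniteIndex}) : {H : Subgroup G // H.FiniteIndex} :=
    have := H.2; have := hFC (x H.1 H.2); have := hFC (y H.1 H.2)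
    ⟨H.1 ⊓ centralizer {x H.1 H.2} ⊓ centralizer {y H.1 H.2}, inferInstance⟩
  let F (n : ℕ) := next^[n] ⟨⊤, inferInstance⟩
  have hF (n : ℕ) : F (n + 1) = next (F n) := Function.iterate_succ_apply' ..
  refine ⟨fun n => x _ (F n).2, fun n => y _ (F n).2, fun n => hxy _ _, fun i j hij => ?_⟩
  have hanti : Antitone fun n => (F n).1 := antitone_nat_of_succ_le fun n => by
    rw [hF]; exact inf_le_left.trans inf_le_left
  have hle : (F j).1 ≤ centralizer {x _ (F i).2} ⊓ centralizer {y _ (F i).2} := by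
    refine (hanti hij).trans ?_
    change (F (i + 1)).1 ≤ _
    rw [hF]
    exact le_inf (inf_le_left.trans inf_le_right) inf_le_right
  have hu := hle (hx _ (F j).2)
  have hv := hle (hy _ (F j).2)
  simp only [mem_inf, mem_centralizer_singleton_iff] at hu hv
  exact ⟨hu.1.symm, hv.1.symm, hu.2.symm, hv.2.symm⟩

theorem pairwise_not_commute_prod_range_mul {u v : ℕ → G} (huv : ∀ n, ¬Commute (u n) (v n))
    (hcomm : ∀ i j, i < j →
      Commute (u i) (u j) ∧ Commute (u i) (v j) ∧ Commute (v i) (u j) ∧ Commute (v i) (v j)) :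
    Pairwise fun m n => ¬Commute (((List.range m).map u).prod * v m)
      (((List.range n).map u).prod * v n) := by
  intro m n hmn
  wlog hlt : m < n generalizing m n
  · exact fun h => this hmn.symm (by omega) h.symm
  obtain ⟨k, rfl⟩ := Nat.exists_eq_add_of_lt hlt
  set P := ((List.range m).map u).prod
  set R := ((List.range k).map fun j => u (m + 1 + j)).prod
  have hsplit : ((List.range (m + k + 1)).map u).prod = P * u m * R := by
    rw [show m + k + 1 = m + 1 + k by omega, List.range_add, List.map_append, List.prod_append,
      List.prod_range_succ, List.map_map]
    rfl
  have hP (z : G) (hz : ∀ i < m, Commute (u i) z) : Commute P z :=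
    Commute.list_prod_left _ _ (by simpa using hz)
  have hR (z : G) (hz : ∀ j, m < j → Commute z (u j)) : Commute z R :=
    Commute.list_prod_right _ _ (by simpa using fun j (_ : j < k) => hz (m + 1 + j) (by omega))
  have hPq : Commute P (R * v (m + k + 1)) :=
    hP _ fun i hi =>
      (hR _ fun j hj => (hcomm i j (by omega)).1).mul_right (hcomm i _ (by omega)).2.1
  have hqx : Commute (R * v (m + k + 1)) (v m) :=
    ((hR _ fun j hj => (hcomm m j hj).2.2.1).mul_right (hcomm m _ (by omega)).2.2.2).symm
  intro h
  rw [hsplit, mul_assoc _ R] at h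
  exact huv m (commute_of_commute_mul_mul (hP _ fun i hi => (hcomm i m hi).2.1)
    (hP _ fun i hi => (hcomm i m hi).1) hPq hqx h).symm

theorem finiteIndex_center_of_pairwise_not_commute_finite
    (hfin : ∀ S : Set G, S.Pairwise (fun x y => ¬Commute x y) → S.Finite) :
    (center G).FiniteIndex := by
  by_contra hZ
  have hFC := finiteIndex_centralizer_of_pairwise_not_commute_finite hfin
  obtain ⟨u, v, huv, hcomm⟩ := exists_seq_not_commute_of_forall_finiteIndex hFC
    fun H _ => exists_not_commute_of_not_finiteIndex_center hFC hZ H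
  have ht := pairwise_not_commute_prod_range_mul huv hcomm
  have hinj : Function.Injective fun n => ((List.range n).map u).prod * v n :=
    fun m n hmn => by_contra fun hne => ht hne (by simp only at hmn; rw [hmn])
  exact Set.infinite_range_of_injective hinj
    (hfin _ (ht.range_pairwise (r := fun x y => ¬Commute x y)))

theorem card_le_index_center_of_pairwise_not_commute [(center G).FiniteIndex] {S : Finset G}
    (hS : (S : Set G).Pairwise fun x y => ¬Commute x y) : S.card ≤ (center G).index := by
  have hinj : Set.InjOn (QuotientGroup.mk : G → G ⧸ center G) S := by
    intro x hx y hy hxy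
    by_contra hne
    have hz : Commute x (x⁻¹ * y) := mem_center_iff.mp (QuotientGroup.eq.mp hxy) x
    exact hS hx hy hne (by simpa using (Commute.refl x).mul_right hz)
  calc S.card = (S : Set G).ncard := (Set.ncard_coe_finset S).symm
    _ = (QuotientGroup.mk '' (S : Set G) : Set (G ⧸ center G)).ncard := (hinj.ncard_image).symm
    _ ≤ Nat.card (G ⧸ center G) := Set.ncard_le_card _
    _ = (center G).index := (index_eq_card _).symm

end Neumann

theorem neumann_commuting_coclique_general (G : Type*) [Group G] :
    ((∀ S : Set G, S.Pairwise (fun x y => ¬ Commute x y) → S.Finite) ↔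
      (Subgroup.center G).FiniteIndex) ∧
    ((∃ n : ℕ, ∀ S : Finset G, (S : Set G).Pairwise (fun x y => ¬ Commute x y) → S.card ≤ n) ↔
      (Subgroup.center G).FiniteIndex) := by
  have hcb : (Subgroup.center G).FiniteIndex →
      ∃ n : ℕ, ∀ S : Finset G, (S : Set G).Pairwise (fun x y => ¬ Commute x y) → S.card ≤ n :=
    fun _ => ⟨_, fun _ => card_le_index_center_of_pairwise_not_commute⟩
  have hba : (∃ n : ℕ, ∀ S : Finset G, (S : Set G).Pairwise (fun x y => ¬ Commute x y) →
      S.card ≤ n) → ∀ S : Set G, S.Pairwise (fun x y => ¬ Commute x y) → S.Finite :=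
    fun ⟨_, hn⟩ _ hS => Set.finite_of_forall_finset_card_le fun T hT => hn T (hS.mono hT)
  exact ⟨⟨finiteIndex_center_of_pairwise_not_commute_finite, hba ∘ hcb⟩,
    ⟨finiteIndex_center_of_pairwise_not_commute_finite ∘ hba, hcb⟩⟩

/-- B. H. Neumann: For an infinite group `G`, the following are equivalent:
(a) the commuting graph of `G` has no infinite coclique (every set of pairwise non-commuting
elements is finite); (b) there is a finite bound on the size of sets of pairwise non-commuting
elements; (c) the centre of `G` has finite index. -/
theorem neumann_commuting_coclique (G : Type*) [Group G] [Infinite G] :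
    ((∀ S : Set G, S.Pairwise (fun x y => ¬ Commute x y) → S.Finite) ↔
      (Subgroup.center G).FiniteIndex) ∧
    ((∃ n : ℕ, ∀ S : Finset G, (S : Set G).Pairwise (fun x y => ¬ Commute x y) → S.card ≤ n) ↔
      (Subgroup.center G).FiniteIndex) :=
  neumann_commuting_coclique_general G
end
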